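/- Let n be a positive integer and let a be a non-negative integer with a ≤ n. Then the q-binomial coefficient qbinom(2n−1, n−a) and the q-integer [n] are coprime in ℤ[q], and likewise qbinom(2n, n−a) and the q-integer [2n+1] are coprime in ℤ[q]. -/
import Mathlib


open Polynomial

/-- The Gaussian (`q`-)binomial coefficient `qbinom n k` as a polynomial in `q = X`
with integer coefficients; it is `0` for `k > n`. -/
noncomputable def qbinom : ℕ → ℕ → Polynomial ℤ
  | _, 0 => 1
  | 0, _ + 1 => 0
  | n + 1, k + 1 => qbinom n k + X ^ (k + 1) * qbinom n (k + 1)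

/-- The `q`-integer `[n] = 1 + q + ⋯ + q^{n-1}` as a polynomial in `q = X`. -/
noncomputable def qint (n : ℕ) : Polynomial ℤ := ∑ i ∈ Finset.range n, X ^ i

noncomputable def qfact : ℕ → Polynomial ℤ
  | 0 => 1
  | n + 1 => qfact n * (X ^ (n + 1) - 1)

lemma qbinom_zero_right (n : ℕ) : qbinom n 0 = 1 := by
  cases n <;> rfl

lemma qbinom_succ_succ (n k : ℕ) :
    qbinom (n + 1) (k + 1) = qbinom n k + X ^ (k + 1) * qbinom n (k + 1) := rfl

lemma qbinom_eq_zero : ∀ {n k : ℕ}, n < k → qbinom n k = 0 := by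
  intro n
  induction n with
  | zero => intro k h; cases k with | zero => omega | succ k => rfl
  | succ n ih =>
    intro k h
    cases k with
    | zero => omega
    | succ k => rw [qbinom_succ_succ, ih (by omega), ih (by omega)]; ring

lemma qbinom_self (n : ℕ) : qbinom n n = 1 := by
  induction n with
  | zero => rfl
  | succ n ih => rw [qbinom_succ_succ, ih, qbinom_eq_zero (by omega)]; ring

lemma X_pow_sub_one_ne_zero {i : ℕ} (h : 0 < i) : (X : Polynomial ℤ) ^ i - 1 ≠ 0 := by
  intro hcon
  have h1 : ((X : Polynomial ℤ) ^ i - 1).coeff i = 1 := by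
    rw [Polynomial.coeff_sub, Polynomial.coeff_X_pow]
    simp [Polynomial.coeff_one, h.ne']
  rw [hcon] at h1
  simp at h1

lemma qfact_ne_zero (n : ℕ) : qfact n ≠ 0 := by
  induction n with
  | zero => simp [qfact]
  | succ n ih => exact mul_ne_zero ih (X_pow_sub_one_ne_zero (by omega))

lemma qbinom_mul_qfact : ∀ {n k : ℕ}, k ≤ n →
    qbinom n k * (qfact k * qfact (n - k)) = qfact n := by
  intro n
  induction n with
  | zero => intro k h; interval_cases k; simp [qbinom_zero_right, qfact]
  | succ n ih =>
    intro k h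
    cases k with
    | zero => simp [qbinom_zero_right, qfact]
    | succ k =>
      rcases eq_or_lt_of_le h with he | hlt
      · obtain rfl : k = n := by omega
        simp [qbinom_self, qfact, qfact_ne_zero]
      · have hk : k ≤ n := by omega
        have hk1 : k + 1 ≤ n := by omega
        rw [qbinom_succ_succ, add_mul]
        have e1 : n + 1 - (k + 1) = (n - k - 1) + 1 := by omega
        have e2 : n - k = (n - k - 1) + 1 := by omega
        have h1 : qbinom n k * (qfact (k + 1) * qfact (n + 1 - (k + 1)))
            = qfact n * (X ^ (k + 1) - 1) := by
          rw [e1, ← e2]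
          show qbinom n k * (qfact k * (X ^ (k+1) - 1) * qfact (n - k)) = _
          rw [← ih hk]; ring
        have h2 : X ^ (k + 1) * qbinom n (k + 1) * (qfact (k + 1) * qfact (n + 1 - (k + 1)))
            = qfact n * (X ^ (k+1) * (X ^ (n - k) - 1)) := by
          rw [e1]
          show X ^ (k+1) * qbinom n (k+1) * (qfact (k+1) * (qfact (n - k - 1) * (X ^ (n-k-1+1) - 1))) = _
          rw [← e2]
          have := ih hk1
          have e3 : n - (k + 1) = n - k - 1 := by omega
          rw [e3] at this
          calc X ^ (k+1) * qbinom n (k+1) * (qfact (k+1) * (qfact (n - k - 1) * (X ^ (n-k) - 1)))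
              = (qbinom n (k+1) * (qfact (k+1) * qfact (n - k - 1))) * (X ^ (k+1) * (X ^ (n-k) - 1)) := by ring
            _ = qfact n * (X ^ (k+1) * (X ^ (n-k) - 1)) := by rw [this]
        rw [h1, h2]
        show _ = qfact n * (X ^ (n + 1) - 1)
        rw [← mul_add]
        congr 1
        have : (X : Polynomial ℤ) ^ (k + 1) * X ^ (n - k) = X ^ (n + 1) := by
          rw [← pow_add]; congr 1; omega
        rw [mul_sub, this]; ring

lemma qbinom_dvd_qfact {n k : ℕ} (h : k ≤ n) : qbinom n k ∣ qfact n :=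
  ⟨_, (qbinom_mul_qfact h).symm⟩

lemma qbinom_mul_X_pow_sub_one {n k : ℕ} (h1 : 0 < k) (h2 : k ≤ n) :
    (X ^ k - 1) * qbinom n k = (X ^ n - 1) * qbinom (n - 1) (k - 1) := by
  have hc : qfact (k - 1) * qfact (n - k) ≠ 0 :=
    mul_ne_zero (qfact_ne_zero _) (qfact_ne_zero _)
  apply mul_right_cancel₀ hc
  have ek : qfact k = qfact (k - 1) * (X ^ k - 1) := by
    obtain ⟨k', rfl⟩ : ∃ k', k = k' + 1 := ⟨k - 1, by omega⟩
    simp [qfact]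
  have en : qfact n = qfact (n - 1) * (X ^ n - 1) := by
    obtain ⟨n', rfl⟩ : ∃ n', n = n' + 1 := ⟨n - 1, by omega⟩
    simp [qfact]
  have h3 : (k - 1) ≤ (n - 1) := by omega
  have h4 : (n - 1) - (k - 1) = n - k := by omega
  calc (X ^ k - 1) * qbinom n k * (qfact (k - 1) * qfact (n - k))
      = qbinom n k * ((qfact (k-1) * (X ^ k - 1)) * qfact (n - k)) := by ring
    _ = qfact n := by rw [← ek, qbinom_mul_qfact h2]
    _ = (X ^ n - 1) * (qbinom (n-1) (k-1) * (qfact (k-1) * qfact ((n-1) - (k-1)))) := by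
        rw [qbinom_mul_qfact h3, en]; ring
    _ = (X ^ n - 1) * qbinom (n - 1) (k - 1) * (qfact (k - 1) * qfact (n - k)) := by
        rw [h4]; ring

lemma vandermonde (M : ℕ) : ∀ (r k : ℕ), qbinom (M + r) k =
    ∑ j ∈ Finset.range (k + 1), X ^ (j * (r + j - k)) * (qbinom M j * qbinom r (k - j)) := by
  intro r
  induction r with
  | zero =>
    intro k
    rw [Finset.sum_eq_single_of_mem k (Finset.self_mem_range_succ k)]
    · simp [qbinom_zero_right]
    · intro j hj hjk
      have : 0 < k - j := by
        have := Finset.mem_range.mp hj; omega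
      rw [qbinom_eq_zero this, mul_zero, mul_zero]
  | succ r ih =>
    intro k
    cases k with
    | zero => simp [qbinom_zero_right]
    | succ k' =>
      have lhs : qbinom (M + (r + 1)) (k' + 1)
          = qbinom (M + r) k' + X ^ (k' + 1) * qbinom (M + r) (k' + 1) := rfl
      rw [lhs, ih k', ih (k' + 1)]
      rw [Finset.sum_range_succ
        (f := fun j => X ^ (j * (r + 1 + j - (k' + 1))) * (qbinom M j * qbinom (r+1) (k' + 1 - j)))]
      rw [Finset.sum_range_succ
        (f := fun j => X ^ (j * (r + j - (k' + 1))) * (qbinom M j * qbinom r (k' + 1 - j)))]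
      have last_eq : X ^ ((k'+1) * (r + 1 + (k'+1) - (k'+1))) * (qbinom M (k'+1) * qbinom (r+1) (k'+1 - (k'+1)))
          = X ^ (k'+1) * (X ^ ((k'+1) * (r + (k'+1) - (k'+1))) * (qbinom M (k'+1) * qbinom r (k'+1 - (k'+1)))) := by
        simp only [Nat.add_sub_cancel, Nat.sub_self, qbinom_zero_right, mul_one]
        rw [← mul_assoc, ← pow_add]
        congr 2
        ring
      rw [mul_add, Finset.mul_sum, ← add_assoc, ← Finset.sum_add_distrib, last_eq]
      congr 1
      apply Finset.sum_congr rfl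
      intro j hj
      have hjk : j < k' + 1 := Finset.mem_range.mp hj
      symm
      have e1 : k' + 1 - j = (k' - j) + 1 := by omega
      have euv : r + 1 + j - (k' + 1) = r + j - k' := by omega
      rw [e1, qbinom_succ_succ, euv, mul_add, mul_add]
      congr 1
      rcases Nat.lt_or_ge (r + j) (k' + 1) with hrj | hrj
      · have z : qbinom r (k' - j + 1) = 0 := qbinom_eq_zero (by omega)
        rw [z]; ring
      · have e2 : k' - j + 1 = k' + 1 - j := by omega
        rw [e2]
        have eexp : j * (r + j - k') + (k' + 1 - j) = (k' + 1) + j * (r + j - (k' + 1)) := by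
          rcases Nat.lt_or_ge (r + j) (k' + 1) with h | h
          · omega
          · obtain ⟨s, hs⟩ : ∃ s, r + j = k' + 1 + s := ⟨r + j - (k'+1), by omega⟩
            have a1 : r + j - k' = s + 1 := by omega
            have a2 : r + j - (k' + 1) = s := by omega
            rw [a1, a2, Nat.mul_succ]
            omega
        calc X ^ (j * (r + j - k')) * (qbinom M j * (X ^ (k' + 1 - j) * qbinom r (k' + 1 - j)))
            = X ^ (j * (r + j - k') + (k' + 1 - j)) * (qbinom M j * qbinom r (k' + 1 - j)) := by
              rw [pow_add]; ring
          _ = X ^ ((k' + 1) + j * (r + j - (k' + 1))) * (qbinom M j * qbinom r (k' + 1 - j)) := by rw [eexp]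
          _ = X ^ (k' + 1) * (X ^ (j * (r + j - (k' + 1))) * (qbinom M j * qbinom r (k' + 1 - j))) := by
              rw [pow_add]; ring

lemma X_pow_sub_one_dvd {d m : ℕ} (h : d ∣ m) : (X : Polynomial ℤ) ^ d - 1 ∣ X ^ m - 1 := by
  obtain ⟨c, rfl⟩ := h
  have : (X : Polynomial ℤ) ^ (d * c) = (X ^ d) ^ c := by rw [← pow_mul]
  rw [this]
  simpa using sub_dvd_pow_sub_pow ((X : Polynomial ℤ) ^ d) 1 c

lemma dvd_gcd_pow (p : Polynomial ℤ) : ∀ a b : ℕ,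
    p ∣ X ^ a - 1 → p ∣ X ^ b - 1 → p ∣ X ^ Nat.gcd a b - 1 := by
  intro a b
  induction a, b using Nat.gcd.induction with
  | H0 b => intro _ hb; simpa using hb
  | H1 a b ha ih =>
    intro hpa hpb
    rw [Nat.gcd_rec]
    apply ih _ hpa
    have key : (X : Polynomial ℤ) ^ (b % a) - 1
        = (X ^ b - 1) - X ^ (b % a) * (X ^ (a * (b / a)) - 1) := by
      have : (X : Polynomial ℤ) ^ (b % a) * X ^ (a * (b / a)) = X ^ b := by
        rw [← pow_add]
        congr 1
        have := Nat.mod_add_div b a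
        omega
      rw [mul_sub, this]
      ring
    rw [key]
    exact dvd_sub hpb ((dvd_trans hpa (X_pow_sub_one_dvd ⟨b / a, rfl⟩)).mul_left _)

lemma prime_dvd_qfact {p : Polynomial ℤ} (hp : Prime p) :
    ∀ {t : ℕ}, p ∣ qfact t → ∃ i, 0 < i ∧ i ≤ t ∧ p ∣ X ^ i - 1 := by
  intro t
  induction t with
  | zero => intro h; exact absurd (isUnit_of_dvd_one (by simpa [qfact] using h)) hp.not_unit
  | succ t ih =>
    intro h
    rcases hp.dvd_mul.mp (by simpa [qfact] using h) with h1 | h2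
    · obtain ⟨i, hi1, hi2, hi3⟩ := ih h1
      exact ⟨i, hi1, by omega, hi3⟩
    · exact ⟨t + 1, by omega, le_refl _, h2⟩

lemma not_dvd_C {p : Polynomial ℤ} (hdeg : 0 < p.natDegree) {c : ℤ} (hc : c ≠ 0) :
    ¬ p ∣ C c := by
  intro h
  have h2 : p.natDegree ≤ (C c).natDegree :=
    Polynomial.natDegree_le_of_dvd h (by simpa using hc)
  simp [Polynomial.natDegree_C] at h2
  omega

lemma qint_coeff_zero {N : ℕ} (hN : 0 < N) : (qint N).coeff 0 = 1 := by
  rw [qint, Polynomial.finset_sum_coeff]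
  rw [Finset.sum_eq_single_of_mem 0 (Finset.mem_range.mpr hN)]
  · simp
  · intro i _ hi
    simp [Polynomial.coeff_X_pow, hi]
    omega

lemma qint_eval_one {N : ℕ} : (qint N).eval 1 = N := by
  simp [qint, Polynomial.eval_finset_sum]

lemma prime_dvd_qint_natDegree_pos {p : Polynomial ℤ} (hp : Prime p) {N : ℕ} (hN : 0 < N)
    (h : p ∣ qint N) : 0 < p.natDegree := by
  rcases Nat.eq_zero_or_pos p.natDegree |>.symm with h1 | h1
  · exact h1
  · exfalso
    have hpC : p = C (p.coeff 0) := Polynomial.eq_C_of_natDegree_eq_zero h1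
    rw [hpC] at h
    have := (Polynomial.C_dvd_iff_dvd_coeff _ _).mp h 0
    rw [qint_coeff_zero hN] at this
    exact hp.not_unit (hpC ▸ (Polynomial.isUnit_C.mpr (isUnit_of_dvd_one this)))

lemma core {p : Polynomial ℤ} (hp : Prime p) {N m k : ℕ} (hN : 0 < N)
    (hdN : N ∣ m + 1)
    (hc : ∀ D, 0 < D → D ∣ N → k + D ≤ m + 1 ∨ k < D)
    (h1 : p ∣ qint N) (h2 : p ∣ qbinom m k) : False := by
  classical
  have hdeg : 0 < p.natDegree := prime_dvd_qint_natDegree_pos hp hN h1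
  have hXN : p ∣ X ^ N - 1 := by
    refine h1.trans ⟨X - 1, ?_⟩
    rw [qint]
    exact (geom_sum_mul X N).symm
  have hex : ∃ t, 0 < t ∧ p ∣ X ^ t - 1 := ⟨N, hN, hXN⟩
  set D := Nat.find hex with hDdef
  obtain ⟨hDpos, hDdvd⟩ : 0 < D ∧ p ∣ X ^ D - 1 := Nat.find_spec hex
  have hmin : ∀ t, 0 < t → t < D → ¬ p ∣ X ^ t - 1 := by
    intro t ht htD hdvd
    exact Nat.find_min hex htD ⟨ht, hdvd⟩
  have hDN : D ∣ N := by
    have hg := dvd_gcd_pow p D N hDdvd hXN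
    have hgpos : 0 < Nat.gcd D N := Nat.gcd_pos_of_pos_left _ hDpos
    have hle : D ≤ Nat.gcd D N := Nat.find_min' hex ⟨hgpos, hg⟩
    have hge : Nat.gcd D N ≤ D := Nat.le_of_dvd hDpos (Nat.gcd_dvd_left _ _)
    have : Nat.gcd D N = D := le_antisymm hge hle
    rw [← this]
    exact Nat.gcd_dvd_right _ _
  have hD1 : 1 < D := by
    rcases Nat.lt_or_ge 1 D with h | h
    · exact h
    · exfalso
      have hD1' : D = 1 := by omega
      have hpx : p ∣ X - 1 := by
        have := hDdvd
        rw [hD1', pow_one] at this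
        exact this
      have hsub : (X : Polynomial ℤ) - 1 ∣ qint N - C ((qint N).eval 1) := by
        have := Polynomial.X_sub_C_dvd_sub_C_eval (a := (1:ℤ)) (p := qint N)
        simpa using this
      have : p ∣ qint N - (qint N - C ((qint N).eval 1)) := dvd_sub h1 (hpx.trans hsub)
      rw [sub_sub_cancel] at this
      rw [qint_eval_one] at this
      exact not_dvd_C hdeg (by exact_mod_cast hN.ne') this
  clear_value D
  -- quotient ring
  set I : Ideal (Polynomial ℤ) := Ideal.span {p} with hI
  haveI hIp : I.IsPrime := (Ideal.span_singleton_prime hp.ne_zero).mpr hp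
  set φ : Polynomial ℤ →+* Polynomial ℤ ⧸ I := Ideal.Quotient.mk I with hφ
  have hker : ∀ f, φ f = 0 ↔ p ∣ f := by
    intro f
    rw [hφ, Ideal.Quotient.eq_zero_iff_mem, hI, Ideal.mem_span_singleton]
  have hxD : φ (X ^ D) = 1 := by
    have h0 : φ (X ^ D - 1) = 0 := (hker _).mpr hDdvd
    rw [map_sub, map_one, sub_eq_zero] at h0
    exact h0
  have hZ : ∀ j, 0 < j → j < D → φ (qbinom D j) = 0 := by
    intro j hj hjD
    have hkey := qbinom_mul_X_pow_sub_one (n := D) (k := j) hj (by omega)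
    have hpr : p ∣ (X ^ j - 1) * qbinom D j := by
      rw [hkey]
      exact Dvd.dvd.mul_right hDdvd _
    rcases hp.dvd_mul.mp hpr with h | h
    · exact absurd h (hmin j hj hjD)
    · exact (hker _).mpr h
  -- step lemma
  have S : ∀ (M k' : ℕ), φ (qbinom (M + D) k')
      = φ (qbinom M k') + (if D ≤ k' then φ (qbinom M (k' - D)) else 0) := by
    intro M k'
    rw [vandermonde M D k', map_sum]
    by_cases hDk : D ≤ k'
    · have hsub : ({k' - D, k'} : Finset ℕ) ⊆ Finset.range (k' + 1) := by
        intro x hx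
        simp only [Finset.mem_insert, Finset.mem_singleton] at hx
        rcases hx with rfl | rfl <;> simp [Finset.mem_range] <;> omega
      rw [← Finset.sum_subset hsub]
      · have hne : k' - D ≠ k' := by omega
        rw [Finset.sum_pair hne]
        have t1 : φ (X ^ ((k' - D) * (D + (k' - D) - k')) * (qbinom M (k' - D) * qbinom D (k' - (k' - D))))
            = φ (qbinom M (k' - D)) := by
          have e1 : D + (k' - D) - k' = 0 := by omega
          have e2 : k' - (k' - D) = D := by omega
          rw [e1, e2, Nat.mul_zero, pow_zero, one_mul, qbinom_self, mul_one]
        have t2 : φ (X ^ (k' * (D + k' - k')) * (qbinom M k' * qbinom D (k' - k')))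
            = φ (qbinom M k') := by
          have e1 : D + k' - k' = D := by omega
          rw [e1, Nat.sub_self, qbinom_zero_right, mul_one, map_mul, mul_comm k' D, pow_mul,
            map_pow, hxD, one_pow, one_mul]
        rw [t1, t2, if_pos hDk, add_comm]
      · intro j hj hjn
        simp only [Finset.mem_insert, Finset.mem_singleton, not_or] at hjn
        have hjr : j < k' + 1 := Finset.mem_range.mp hj
        have h0 : 0 < k' - j := by omega
        rcases Nat.lt_or_ge (k' - j) D with hlt | hge
        · rw [map_mul, map_mul, hZ _ h0 hlt, mul_zero, mul_zero]
        · have : D < k' - j := by omega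
          rw [qbinom_eq_zero this, mul_zero, mul_zero, map_zero]
    · rw [Finset.sum_eq_single_of_mem k' (Finset.self_mem_range_succ k')]
      · have e1 : D + k' - k' = D := by omega
        rw [if_neg hDk, add_zero, e1, Nat.sub_self, qbinom_zero_right, mul_one, map_mul,
          mul_comm k' D, pow_mul, map_pow, hxD, one_pow, one_mul]
      · intro j hj hjk
        have hjr : j < k' + 1 := Finset.mem_range.mp hj
        have h0 : 0 < k' - j := by omega
        have hlt : k' - j < D := by omega
        rw [map_mul, map_mul, hZ _ h0 hlt, mul_zero, mul_zero]
  -- Lucas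
  have L : ∀ (m₁ : ℕ), ∀ (r k' : ℕ), r < D →
      φ (qbinom (m₁ * D + r) k')
        = (Nat.choose m₁ (k' / D) : Polynomial ℤ ⧸ I) * φ (qbinom r (k' % D)) := by
    intro m₁
    induction m₁ with
    | zero =>
      intro r k' hr
      rcases Nat.lt_or_ge k' D with h | h
      · rw [Nat.div_eq_of_lt h, Nat.mod_eq_of_lt h]
        simp
      · have h1' : qbinom r k' = 0 := qbinom_eq_zero (by omega)
        have h2' : Nat.choose 0 (k' / D) = 0 := by
          have : 0 < k' / D := Nat.div_pos h hDpos
          simp [Nat.choose_eq_zero_of_lt this]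
        simp [h1', h2']
    | succ m₁ ih =>
      intro r k' hr
      have e : (m₁ + 1) * D + r = (m₁ * D + r) + D := by ring
      rw [e, S (m₁ * D + r) k']
      rcases Nat.lt_or_ge k' D with h | h
      · rw [if_neg (by omega), add_zero, ih r k' hr]
        have : k' / D = 0 := Nat.div_eq_of_lt h
        rw [this]
        simp
      · rw [if_pos h, ih r k' hr, ih r (k' - D) hr]
        obtain ⟨t, rfl⟩ : ∃ t, k' = D + t := ⟨k' - D, by omega⟩
        have e1 : D + t - D = t := by omega
        have e2 : (D + t) % D = t % D := Nat.add_mod_left D t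
        have e3 : (D + t) / D = t / D + 1 := by
          rw [add_comm]
          exact Nat.add_div_right t hDpos
        rw [e1, e2, e3, Nat.choose_succ_succ]
        push_cast
        ring
  -- final assembly
  have hDm : D ∣ m + 1 := hDN.trans hdN
  set q := (m + 1) / D with hq
  have hqD : q * D = m + 1 := Nat.div_mul_cancel hDm
  clear_value q
  have hq1 : 1 ≤ q := by
    by_contra hcon
    have hq0 : q = 0 := by omega
    rw [hq0, Nat.zero_mul] at hqD
    omega
  have hsub : (q - 1) * D = q * D - D := by
    rw [Nat.sub_mul, one_mul]
  have hDle : D ≤ m + 1 := Nat.le_of_dvd (by omega) hDm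
  have hmeq : m = (q - 1) * D + (D - 1) := by omega
  have hL := L (q - 1) (D - 1) k (by omega)
  rw [← hmeq] at hL
  have hzero : φ (qbinom m k) = 0 := (hker _).mpr h2
  rw [hzero] at hL
  have hfac := mul_eq_zero.mp hL.symm
  rcases hfac with hA | hB
  · -- choose ≠ 0
    have hkd : k / D ≤ q - 1 := by
      rcases hc D hDpos hDN with hcase | hcase
      · have : k ≤ (q - 1) * D + (D - 1) := by omega
        have h5 : k / D ≤ ((q - 1) * D + (D - 1)) / D := Nat.div_le_div_right this
        have h6 : ((q - 1) * D + (D - 1)) / D = q - 1 := by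
          rw [add_comm, mul_comm, Nat.add_mul_div_left _ _ hDpos,
            Nat.div_eq_of_lt (show D - 1 < D by omega), Nat.zero_add]
        omega
      · have : k / D = 0 := Nat.div_eq_of_lt hcase
        omega
    have hchoose : Nat.choose (q - 1) (k / D) ≠ 0 := by
      have := Nat.choose_pos hkd
      omega
    have hcast : ((Nat.choose (q - 1) (k / D) : ℕ) : Polynomial ℤ ⧸ I) = φ ((Nat.choose (q - 1) (k / D) : ℕ) : Polynomial ℤ) := by
      rw [map_natCast]
    rw [hcast] at hA
    have hpdvd : p ∣ ((Nat.choose (q - 1) (k / D) : ℕ) : Polynomial ℤ) := (hker _).mp hA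
    rw [← Polynomial.C_eq_natCast] at hpdvd
    exact not_dvd_C hdeg (by exact_mod_cast hchoose) hpdvd
  · -- qbinom (D-1) (k % D) not divisible
    have hmod : k % D < D := Nat.mod_lt _ hDpos
    have hdvd2 : p ∣ qbinom (D - 1) (k % D) := (hker _).mp hB
    have hdvd3 : p ∣ qfact (D - 1) := hdvd2.trans (qbinom_dvd_qfact (by omega))
    obtain ⟨i, hi1, hi2, hi3⟩ := prime_dvd_qfact hp hdvd3
    exact hmin i hi1 (by omega) hi3

lemma qint_ne_zero {N : ℕ} (hN : 0 < N) : qint N ≠ 0 := by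
  intro h
  have := qint_coeff_zero hN
  rw [h] at this
  simp at this

lemma relprime_of {a b : Polynomial ℤ} (hb : b ≠ 0)
    (h : ∀ p, Prime p → p ∣ a → p ∣ b → False) : IsRelPrime a b := by
  intro d hda hdb
  by_contra hu
  have hd0 : d ≠ 0 := by
    intro h0
    rw [h0] at hdb
    exact hb (zero_dvd_iff.mp hdb)
  obtain ⟨q, hqirr, hqd⟩ := WfDvdMonoid.exists_irreducible_factor hu hd0
  exact h q (UniqueFactorizationMonoid.irreducible_iff_prime.mp hqirr)
    (hqd.trans hda) (hqd.trans hdb)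

/-- `qbinom(2n-1, n-a)` and `[n]` have no common non-unit factor in `ℤ[q]`, and
likewise `qbinom(2n, n-a)` and `[2n+1]` have no common non-unit factor. -/
theorem stmt18 (n a : ℕ) (hn : 0 < n) (ha : a ≤ n) :
    IsRelPrime (qbinom (2 * n - 1) (n - a)) (qint n) ∧
      IsRelPrime (qbinom (2 * n) (n - a)) (qint (2 * n + 1)) := by
  constructor
  · apply relprime_of (qint_ne_zero hn)
    intro p hp hpa hpb
    refine core hp hn ⟨2, by omega⟩ ?_ hpb hpa
    intro D hD hDn
    have := Nat.le_of_dvd hn hDn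
    omega
  · apply relprime_of (qint_ne_zero (by omega))
    intro p hp hpa hpb
    refine core hp (by omega) (dvd_refl _) ?_ hpb hpa
    intro D hD hDn
    have := Nat.le_of_dvd (by omega) hDn
    omega
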